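/- arXiv:1611.09734 — 6 statements merged into one kernel-verified Lean document; each statement's English description precedes it below -/
import Mathlib

section
/- Let Y be a semilattice, (B_α)_{α∈Y} a family of pairwise disjoint rectangular bands, and for each α ≥ β a homomorphism ψ_{α,β} : B_α → B_β such that ψ_{α,α} = id and ψ_{α,β}ψ_{β,γ} = ψ_{α,γ} whenever α ≥ β ≥ γ. Then the disjoint union B = ⋃_α B_α with multiplication a * b = (a ψ_{α,αβ})(b ψ_{β,αβ}) for a ∈ B_α, b ∈ B_β is a band. -/
/-- The multiplication of a strong semilattice of rectangular bands. -/
def strongMul {Y : Type*} [SemilatticeInf Y] {B : Y → Type*} [∀ α, Semigroup (B α)]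
    (ψ : ∀ α β : Y, β ≤ α → B α → B β) (a b : Σ α, B α) : Σ α, B α :=
  ⟨a.1 ⊓ b.1, ψ a.1 (a.1 ⊓ b.1) inf_le_left a.2 * ψ b.1 (a.1 ⊓ b.1) inf_le_right b.2⟩

/-- A strong semilattice of rectangular bands is a band: the multiplication
`a * b = (a ψ_{α,αβ})(b ψ_{β,αβ})` is associative and idempotent. -/
theorem stmt_9 {Y : Type*} [SemilatticeInf Y] (B : Y → Type*) [∀ α, Semigroup (B α)]
    (hband : ∀ (α : Y) (x : B α), x * x = x)
    (hrect : ∀ (α : Y) (x y : B α), x * y * x = x)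
    (ψ : ∀ α β : Y, β ≤ α → B α → B β)
    (hhom : ∀ (α β : Y) (h : β ≤ α) (x y : B α),
      ψ α β h (x * y) = ψ α β h x * ψ α β h y)
    (hid : ∀ (α : Y) (x : B α), ψ α α le_rfl x = x)
    (htrans : ∀ (α β γ : Y) (h1 : β ≤ α) (h2 : γ ≤ β) (x : B α),
      ψ β γ h2 (ψ α β h1 x) = ψ α γ (h2.trans h1) x) :
    (∀ x y z : Σ α, B α,
      strongMul ψ (strongMul ψ x y) z = strongMul ψ x (strongMul ψ y z)) ∧
    (∀ x : Σ α, B α, strongMul ψ x x = x) := by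
  constructor
  · rintro ⟨α, a⟩ ⟨β, b⟩ ⟨γ, c⟩
    unfold strongMul
    dsimp only
    have mulh : ∀ (D D' : Y) (e : D = D') (hα : D ≤ α) (hβ : D ≤ β) (hγ : D ≤ γ)
        (hα' : D' ≤ α) (hβ' : D' ≤ β) (hγ' : D' ≤ γ),
        HEq (ψ α D hα a * ψ β D hβ b * ψ γ D hγ c)
          (ψ α D' hα' a * (ψ β D' hβ' b * ψ γ D' hγ' c)) := by
      intro D D' e hα hβ hγ hα' hβ' hγ'
      subst e
      rw [mul_assoc]
    refine Sigma.ext (inf_assoc α β γ) ?_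
    dsimp only
    rw [hhom, hhom, htrans, htrans, htrans, htrans]
    exact mulh _ _ (inf_assoc α β γ) _ _ _ _ _ _
  · rintro ⟨α, a⟩
    unfold strongMul
    dsimp only
    have key : ∀ (D : Y) (e : D = α) (h : D ≤ α),
        HEq (ψ α D h a * ψ α D h a) a := by
      intro D e h
      subst e
      rw [hband, hid]
    exact Sigma.ext (inf_idem α) (key _ (inf_idem α) _)
end

section
/- If B = ⋃_{α∈Y} B_α is a homogeneous band with non-trivial structure semilattice Y, then Y is dense (no element covers another) and has no maximal or minimal elements. -/
/-- A band is homogeneous if every isomorphism between finite subsemigroups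
extends to an automorphism. -/
def IsHomogeneous (B : Type*) [Semigroup B] : Prop :=
  ∀ (A₁ A₂ : Subsemigroup B), (A₁ : Set B).Finite → (A₂ : Set B).Finite →
    ∀ θ : A₁ ≃* A₂, ∃ Θ : B ≃* B, ∀ a : A₁, Θ (a : B) = (θ a : B)

/-- Transitivity of the band quasi-order `x ≤ y ↔ x*y*x = x`. -/
lemma band_le_trans {B : Type*} [Semigroup B] (hband : ∀ x : B, x * x = x)
    {x y z : B} (hx : x * y * x = x) (hy : y * z * y = y) : x * z * x = x := by
  have A : (x*y*z)*(x*y*x) = (x*y*z)*(y*x) := by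
    calc (x*y*z)*(x*y*x) = (x*y*z)*(x*(y*z*y)*x) := by rw [hy]
    _ = ((x*y*z)*(x*y*z))*(y*x) := by simp only [mul_assoc]
    _ = (x*y*z)*(y*x) := by rw [hband]
  calc x*z*x = x*y*x*z*(x*y*x) := by rw [hx]
  _ = x*(y*z*y)*x*z*(x*y*x) := by rw [hy]
  _ = ((x*y*z)*(y*x))*(z*(x*y*x)) := by simp only [mul_assoc]
  _ = ((x*y*z)*(x*y*x))*(z*(x*y*x)) := by rw [A]
  _ = (x*y)*((z*(x*y*x))*(z*(x*y*x))) := by simp only [mul_assoc]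
  _ = (x*y)*(z*(x*y*x)) := by rw [hband]
  _ = (x*y*z)*(x*y*x) := by simp only [mul_assoc]
  _ = (x*y*z)*(y*x) := by rw [A]
  _ = x*(y*z*y)*x := by simp only [mul_assoc]
  _ = x*y*x := by rw [hy]
  _ = x := hx

/-- Any element can be mapped to any other element by an automorphism
of a homogeneous band. -/
lemma single_ext {B : Type*} [Semigroup B] (hband : ∀ x : B, x * x = x)
    (hhom : IsHomogeneous B) (u v : B) : ∃ Θ : B ≃* B, Θ u = v := by
  classical
  let S₁ : Subsemigroup B :=
    ⟨{u}, by
      rintro a b ha hb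
      simp only [Set.mem_singleton_iff] at *
      rw [ha, hb, hband]⟩
  let S₂ : Subsemigroup B :=
    ⟨{v}, by
      rintro a b ha hb
      simp only [Set.mem_singleton_iff] at *
      rw [ha, hb, hband]⟩
  have hv : v ∈ S₂ := rfl
  have hu : u ∈ S₁ := rfl
  let θ : S₁ ≃* S₂ :=
    { toFun := fun _ => ⟨v, hv⟩
      invFun := fun _ => ⟨u, hu⟩
      left_inv := by rintro ⟨a, ha⟩; exact Subtype.ext ha.symm
      right_inv := by rintro ⟨a, ha⟩; exact Subtype.ext ha.symm
      map_mul' := by intro a b; exact Subtype.ext (hband v).symm }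
  obtain ⟨Θ, hΘ⟩ := hhom S₁ S₂ (Set.finite_singleton u) (Set.finite_singleton v) θ
  exact ⟨Θ, hΘ ⟨u, hu⟩⟩

/-- A 2-chain can be mapped onto any other 2-chain by an automorphism
of a homogeneous band. -/
lemma chain_ext {B : Type*} [Semigroup B] (hband : ∀ x : B, x * x = x)
    (hhom : IsHomogeneous B) (p₁ q₁ p₂ q₂ : B)
    (h1 : p₁ * q₁ = p₁) (h1' : q₁ * p₁ = p₁)
    (h2 : p₂ * q₂ = p₂) (h2' : q₂ * p₂ = p₂)
    (ne1 : p₁ ≠ q₁) (ne2 : p₂ ≠ q₂) :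
    ∃ Θ : B ≃* B, Θ p₁ = p₂ ∧ Θ q₁ = q₂ := by
  classical
  have mm : ∀ (p q : B), p * q = p → q * p = p →
      ∀ a b : B, a ∈ ({p, q} : Set B) → b ∈ ({p, q} : Set B) →
        a * b ∈ ({p, q} : Set B) := by
    intro p q hpq hqp a b ha hb
    simp only [Set.mem_insert_iff, Set.mem_singleton_iff] at *
    rcases ha with rfl | rfl <;> rcases hb with rfl | rfl
    · exact Or.inl (hband _)
    · exact Or.inl hpq
    · exact Or.inl hqp
    · exact Or.inr (hband _)
  let S₁ : Subsemigroup B := ⟨{p₁, q₁}, fun ha hb => mm p₁ q₁ h1 h1' _ _ ha hb⟩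
  let S₂ : Subsemigroup B := ⟨{p₂, q₂}, fun ha hb => mm p₂ q₂ h2 h2' _ _ ha hb⟩
  have hp₁ : p₁ ∈ S₁ := Or.inl rfl
  have hq₁ : q₁ ∈ S₁ := Or.inr rfl
  have hp₂ : p₂ ∈ S₂ := Or.inl rfl
  have hq₂ : q₂ ∈ S₂ := Or.inr rfl
  have hmem₁ : ∀ a : B, a ∈ S₁ → a = p₁ ∨ a = q₁ := fun a ha => ha
  have hmem₂ : ∀ a : B, a ∈ S₂ → a = p₂ ∨ a = q₂ := fun a ha => ha
  let f : S₁ → S₂ := fun a => if (a : B) = p₁ then ⟨p₂, hp₂⟩ else ⟨q₂, hq₂⟩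
  let g : S₂ → S₁ := fun b => if (b : B) = p₂ then ⟨p₁, hp₁⟩ else ⟨q₁, hq₁⟩
  have hf_p : f ⟨p₁, hp₁⟩ = ⟨p₂, hp₂⟩ := by simp [f]
  have hf_q : f ⟨q₁, hq₁⟩ = ⟨q₂, hq₂⟩ := by simp [f, Ne.symm ne1]
  have hfval : ∀ (u : B) (hu : u ∈ S₁),
      ((f ⟨u, hu⟩ : S₂) : B) = if u = p₁ then p₂ else q₂ := by
    intro u hu
    by_cases h : u = p₁ <;> simp [f, h]
  let θ : S₁ ≃* S₂ :=
    { toFun := f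
      invFun := g
      left_inv := by
        rintro ⟨a, ha⟩
        rcases hmem₁ a ha with rfl | rfl
        · simp [f, g]
        · simp [f, g, Ne.symm ne1, Ne.symm ne2]
      right_inv := by
        rintro ⟨a, ha⟩
        rcases hmem₂ a ha with rfl | rfl
        · simp [f, g]
        · simp [f, g, Ne.symm ne1, Ne.symm ne2]
      map_mul' := by
        rintro ⟨a, ha⟩ ⟨b, hb⟩
        apply Subtype.ext
        have hab : (⟨a, ha⟩ * ⟨b, hb⟩ : S₁) = ⟨a * b, S₁.mul_mem ha hb⟩ := rfl
        rw [hab, MulMemClass.coe_mul, hfval, hfval, hfval]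
        rcases hmem₁ a ha with h | h <;> rcases hmem₁ b hb with h' | h' <;>
          rw [h, h'] <;> simp [hband, Ne.symm ne1, h1, h1', h2, h2'] }
  have fin1 : (S₁ : Set B).Finite := (Set.finite_singleton q₁).insert p₁
  have fin2 : (S₂ : Set B).Finite := (Set.finite_singleton q₂).insert p₂
  obtain ⟨Θ, hΘ⟩ := hhom S₁ S₂ fin1 fin2 θ
  refine ⟨Θ, ?_, ?_⟩
  · have h := hΘ ⟨p₁, hp₁⟩
    rw [h]
    show ((f ⟨p₁, hp₁⟩ : S₂) : B) = p₂
    rw [hf_p]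
  · have h := hΘ ⟨q₁, hq₁⟩
    rw [h]
    show ((f ⟨q₁, hq₁⟩ : S₂) : B) = q₂
    rw [hf_q]

/-- If `B` is a homogeneous band with non-trivial structure semilattice, then the
structure semilattice is dense and has no maximal or minimal elements.  Here the
`D`-class quasi-order is expressed by `[x] ≤ [y] ↔ x*y*x = x`, and
`x D y ↔ x*y*x = x ∧ y*x*y = y`. -/
theorem stmt_12 {B : Type*} [Semigroup B] (hband : ∀ x : B, x * x = x)
    (hhom : IsHomogeneous B)
    (hnontriv : ∃ x y : B, ¬ (x * y * x = x ∧ y * x * y = y)) :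
    (∀ x y : B, (y * x * y = y ∧ ¬ x * y * x = x) →
      ∃ z : B, (y * z * y = y ∧ ¬ z * y * z = z) ∧ (z * x * z = z ∧ ¬ x * z * x = x)) ∧
    (∀ x : B, ∃ y : B, x * y * x = x ∧ ¬ y * x * y = y) ∧
    (∀ x : B, ∃ y : B, y * x * y = y ∧ ¬ x * y * x = x) := by
  -- Extract a strict two-element chain p < q (with pq = qp = p, p ≠ q).
  obtain ⟨x₀, y₀, hnt⟩ := hnontriv
  obtain ⟨p, q, hpq, hqp, hne⟩ :
      ∃ p q : B, p * q = p ∧ q * p = p ∧ p ≠ q := by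
    by_cases h1 : x₀ * y₀ * x₀ = x₀
    · have h2 : ¬ y₀ * x₀ * y₀ = y₀ := fun h2 => hnt ⟨h1, h2⟩
      refine ⟨y₀ * x₀ * y₀, y₀, ?_, ?_, h2⟩
      · rw [mul_assoc, hband]
      · calc y₀ * (y₀ * x₀ * y₀) = y₀ * y₀ * x₀ * y₀ := by simp only [mul_assoc]
        _ = y₀ * x₀ * y₀ := by rw [hband]
    · refine ⟨x₀ * y₀ * x₀, x₀, ?_, ?_, h1⟩
      · rw [mul_assoc, hband]
      · calc x₀ * (x₀ * y₀ * x₀) = x₀ * x₀ * y₀ * x₀ := by simp only [mul_assoc]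
        _ = x₀ * y₀ * x₀ := by rw [hband]
  -- No maximal elements.
  have noMax : ∀ x : B, ∃ y : B, x * y * x = x ∧ ¬ y * x * y = y := by
    intro x
    obtain ⟨Θ, hΘ⟩ := single_ext hband hhom p x
    refine ⟨Θ q, ?_, ?_⟩
    · calc x * Θ q * x = Θ p * Θ q * Θ p := by rw [hΘ]
      _ = Θ (p * q * p) := by rw [map_mul, map_mul]
      _ = Θ p := by rw [hpq, hband]
      _ = x := hΘ
    · intro h
      have h2 : Θ q * x * Θ q = Θ p := by
        calc Θ q * x * Θ q = Θ q * Θ p * Θ q := by rw [hΘ]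
        _ = Θ (q * p * q) := by rw [map_mul, map_mul]
        _ = Θ p := by rw [hqp, hpq]
      rw [h] at h2
      exact hne (Θ.injective h2).symm
  -- No minimal elements.
  have noMin : ∀ x : B, ∃ y : B, y * x * y = y ∧ ¬ x * y * x = x := by
    intro x
    obtain ⟨Θ, hΘ⟩ := single_ext hband hhom q x
    refine ⟨Θ p, ?_, ?_⟩
    · calc Θ p * x * Θ p = Θ p * Θ q * Θ p := by rw [hΘ]
      _ = Θ (p * q * p) := by rw [map_mul, map_mul]
      _ = Θ p := by rw [hpq, hband]
    · intro h
      have h2 : x * Θ p * x = Θ p := by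
        calc x * Θ p * x = Θ q * Θ p * Θ q := by rw [hΘ]
        _ = Θ (q * p * q) := by rw [map_mul, map_mul]
        _ = Θ p := by rw [hqp, hpq]
      rw [h] at h2
      rw [← hΘ] at h2
      exact hne (Θ.injective h2.symm)
  refine ⟨?_, noMax, noMin⟩
  -- Density.
  rintro x y ⟨hyxy, hnxyx⟩
  set b := x * y * x with hb_def
  clear_value b
  have hbx : b * x = b := by rw [hb_def, mul_assoc, hband]
  have hxb : x * b = b := by
    rw [hb_def]
    calc x * (x * y * x) = x * x * y * x := by simp only [mul_assoc]
    _ = x * y * x := by rw [hband]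
  have hbnex : b ≠ x := hnxyx
  have hyb : y * b * y = y := by
    rw [hb_def]
    calc y * (x * y * x) * y = (y * x * y) * (x * y) := by simp only [mul_assoc]
    _ = y * (x * y) := by rw [hyxy]
    _ = y * x * y := by rw [mul_assoc]
    _ = y := hyxy
  -- pick w strictly below b, set c = b*w*b
  obtain ⟨w, hw1, hw2⟩ := noMin b
  set c := b * w * b with hc_def
  clear_value c
  have hcb : c * b = c := by rw [hc_def, mul_assoc, hband]
  have hbc : b * c = c := by
    rw [hc_def]
    calc b * (b * w * b) = b * b * w * b := by simp only [mul_assoc]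
    _ = b * w * b := by rw [hband]
  have hcneb : c ≠ b := hw2
  have hcx : c * x = c := by
    rw [hc_def]
    calc b * w * b * x = b * w * (b * x) := by simp only [mul_assoc]
    _ = b * w * b := by rw [hbx]
  have hxc : x * c = c := by
    rw [hc_def]
    calc x * (b * w * b) = (x * b) * (w * b) := by simp only [mul_assoc]
    _ = b * (w * b) := by rw [hxb]
    _ = b * w * b := by rw [mul_assoc]
  have hcnex : c ≠ x := by
    intro h
    apply hbnex
    have h3 := hcb
    rw [h] at h3
    rw [← hxb, h3]
  -- map the chain {c, x} onto the chain {b, x}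
  obtain ⟨Θ, hΘc, hΘx⟩ := chain_ext hband hhom c x b x hcx hxc hbx hxb hcnex hbnex
  set z := Θ b with hz_def
  clear_value z
  have hbzb : b * z * b = b := by
    calc b * z * b = Θ c * Θ b * Θ c := by rw [hΘc, ← hz_def]
    _ = Θ (c * b * c) := by rw [map_mul, map_mul]
    _ = Θ c := by rw [hcb, hband]
    _ = b := hΘc
  have hzbz : z * b * z = b := by
    calc z * b * z = Θ b * Θ c * Θ b := by rw [hΘc, ← hz_def]
    _ = Θ (b * c * b) := by rw [map_mul, map_mul]
    _ = Θ (c * b) := by rw [hbc]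
    _ = Θ c := by rw [hcb]
    _ = b := hΘc
  have hzxz : z * x * z = z := by
    calc z * x * z = Θ b * Θ x * Θ b := by rw [hΘx, ← hz_def]
    _ = Θ (b * x * b) := by rw [map_mul, map_mul]
    _ = Θ (b * b) := by rw [hbx]
    _ = Θ b := by rw [hband]
    _ = z := hz_def.symm
  have hxzx : x * z * x = z := by
    calc x * z * x = Θ x * Θ b * Θ x := by rw [hΘx, ← hz_def]
    _ = Θ (x * b * x) := by rw [map_mul, map_mul]
    _ = Θ (b * x) := by rw [hxb]
    _ = Θ b := by rw [hbx]
    _ = z := hz_def.symm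
  refine ⟨z, ⟨?_, ?_⟩, ?_, ?_⟩
  · exact band_le_trans hband hyb hbzb
  · intro hzyz
    have h3 : z * b * z = z := band_le_trans hband hzyz hyb
    have hbz : b = z := hzbz.symm.trans h3
    apply hcneb
    apply Θ.injective
    rw [hΘc, ← hz_def]
    exact hbz
  · exact hzxz
  · intro h
    have hzx : z = x := hxzx.symm.trans h
    apply hbnex
    apply Θ.injective
    rw [hΘx, ← hz_def]
    exact hzx
end

section
/- If B is a homogeneous band with structure semilattice Y, then Y is 2-homogeneous: every isomorphism between two-element subsemilattices of Y extends to an automorphism of Y. -/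
section Aux

variable {B : Type*} [Semigroup B]

lemma sandwich (hband : ∀ x : B, x * x = x) (u y v : B) :
    (u * y * v) * y * (u * y * v) = u * y * v := by
  have h1 : u * (y * (u * y * v)) = u * y * v :=
    calc u * (y * (u * y * v)) = (u * y) * ((u * y) * v) := (mul_assoc u y _).symm
      _ = ((u * y) * (u * y)) * v := (mul_assoc _ _ _).symm
      _ = u * y * v := by rw [hband]
  calc (u * y * v) * y * (u * y * v)
      = (u * y * v) * (y * (u * y * v)) := mul_assoc _ _ _
    _ = (u * (y * (u * y * v))) * (y * (u * y * v)) := by rw [h1]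
    _ = u * ((y * (u * y * v)) * (y * (u * y * v))) := mul_assoc _ _ _
    _ = u * (y * (u * y * v)) := by rw [hband]
    _ = u * y * v := h1

/-- transitivity of the D-preorder `x ⪯ y ↔ x*y*x = x` on a band. -/
lemma dtrans (hband : ∀ x : B, x * x = x) {p q r : B}
    (hpq : p * q * p = p) (hqr : q * r * q = q) : p * r * p = p := by
  have hp : p = (p * q) * r * (q * p) := by
    calc p = p * q * p := hpq.symm
      _ = p * (q * r * q) * p := by rw [hqr]
      _ = (p * q) * r * (q * p) := by simp only [mul_assoc]
  rw [hp]
  exact sandwich hband (p * q) r (q * p)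

/-- basic facts about `d = a*b*a` when `b*a*b = b`. -/
lemma side_facts (hband : ∀ x : B, x * x = x) (a b : B) (hb : b * a * b = b) :
    a * (a * b * a) = a * b * a ∧ (a * b * a) * a = a * b * a ∧
      (a * b * a) * b * (a * b * a) = a * b * a ∧ b * (a * b * a) * b = b := by
  refine ⟨?_, ?_, ?_, ?_⟩
  · calc a * (a * b * a) = (a * (a * b)) * a := (mul_assoc _ _ _).symm
      _ = ((a * a) * b) * a := by rw [← mul_assoc]
      _ = a * b * a := by rw [hband]
  · calc (a * b * a) * a = (a * b) * (a * a) := mul_assoc _ _ _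
      _ = a * b * a := by rw [hband]
  · have e1 : (a * b * a) * b = a * b :=
      calc (a * b * a) * b = (a * b) * (a * b) := mul_assoc _ _ _
        _ = a * b := hband _
    calc (a * b * a) * b * (a * b * a) = (a * b) * ((a * b) * a) := by rw [e1, mul_assoc]
      _ = ((a * b) * (a * b)) * a := (mul_assoc _ _ _).symm
      _ = a * b * a := by rw [hband]
  · have e3 : b * (a * b * a) = b * a :=
      calc b * (a * b * a) = (b * (a * b)) * a := (mul_assoc _ _ _).symm
        _ = ((b * a) * b) * a := by rw [← mul_assoc]
        _ = b * a := by rw [hb]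
    calc b * (a * b * a) * b = (b * a) * b := by rw [e3]
      _ = b := hb

end Aux

/-- If `B` is a homogeneous band then its structure semilattice `Y` is
2-homogeneous: for any two-element chains `a₁ > b₁` and `a₂ > b₂` of `D`-classes
there is an automorphism of `Y` mapping `[a₁] ↦ [a₂]` and `[b₁] ↦ [b₂]`.  An
automorphism of `Y` is encoded as a map `π : B → B` that reflects/preserves the
`D`-class order (`[x] ≤ [y] ↔ x*y*x = x`) and is surjective on `D`-classes. -/
theorem stmt_13 {B : Type*} [Semigroup B] (hband : ∀ x : B, x * x = x)
    (hhom : IsHomogeneous B)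
    (a₁ b₁ a₂ b₂ : B)
    (h1 : b₁ * a₁ * b₁ = b₁ ∧ ¬ a₁ * b₁ * a₁ = a₁)
    (h2 : b₂ * a₂ * b₂ = b₂ ∧ ¬ a₂ * b₂ * a₂ = a₂) :
    ∃ π : B → B,
      (∀ x y : B, x * y * x = x ↔ (π x) * (π y) * (π x) = π x) ∧
      (∀ y : B, ∃ x : B, (π x) * y * (π x) = π x ∧ y * (π x) * y = y) ∧
      ((π a₁) * a₂ * (π a₁) = π a₁ ∧ a₂ * (π a₁) * a₂ = a₂) ∧
      ((π b₁) * b₂ * (π b₁) = π b₁ ∧ b₂ * (π b₁) * b₂ = b₂) := by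
  classical
  obtain ⟨hb1, hn1⟩ := h1
  obtain ⟨hb2, hn2⟩ := h2
  obtain ⟨had1, hda1, hdbd1, hbdb1⟩ := side_facts hband a₁ b₁ hb1
  obtain ⟨had2, hda2, hdbd2, hbdb2⟩ := side_facts hband a₂ b₂ hb2
  set d₁ := a₁ * b₁ * a₁ with hd₁
  set d₂ := a₂ * b₂ * a₂ with hd₂
  have hne1 : d₁ ≠ a₁ := hn1
  have hne2 : d₂ ≠ a₂ := hn2
  -- the two-element subsemigroups
  have mul_cases : ∀ (a d : B), a * d = d → d * a = d →
      ∀ x ∈ ({a, d} : Set B), ∀ y ∈ ({a, d} : Set B), x * y ∈ ({a, d} : Set B) := by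
    rintro a d had hda x (rfl | rfl) y (rfl | rfl)
    · left; exact hband _
    · right; exact had
    · right; exact hda
    · right; exact hband _
  let S₁ : Subsemigroup B :=
    { carrier := {a₁, d₁}
      mul_mem' := fun hx hy => mul_cases a₁ d₁ had1 hda1 _ hx _ hy }
  let S₂ : Subsemigroup B :=
    { carrier := {a₂, d₂}
      mul_mem' := fun hx hy => mul_cases a₂ d₂ had2 hda2 _ hx _ hy }
  have ha₁S : a₁ ∈ S₁ := Or.inl rfl
  have hd₁S : d₁ ∈ S₁ := Or.inr rfl
  have ha₂S : a₂ ∈ S₂ := Or.inl rfl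
  have hd₂S : d₂ ∈ S₂ := Or.inr rfl
  -- the isomorphism
  let f : S₁ → S₂ := fun x => if (x : B) = a₁ then ⟨a₂, ha₂S⟩ else ⟨d₂, hd₂S⟩
  let g : S₂ → S₁ := fun x => if (x : B) = a₂ then ⟨a₁, ha₁S⟩ else ⟨d₁, hd₁S⟩
  have hfa : ∀ z : S₁, (z : B) = a₁ → f z = ⟨a₂, ha₂S⟩ := fun z hz => by
    simp only [f, if_pos hz]
  have hfd : ∀ z : S₁, (z : B) = d₁ → f z = ⟨d₂, hd₂S⟩ := fun z hz => by
    simp only [f, if_neg (fun h => hne1 (hz.symm.trans h))]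
  have hga : ∀ z : S₂, (z : B) = a₂ → g z = ⟨a₁, ha₁S⟩ := fun z hz => by
    simp only [g, if_pos hz]
  have hgd : ∀ z : S₂, (z : B) = d₂ → g z = ⟨d₁, hd₁S⟩ := fun z hz => by
    simp only [g, if_neg (fun h => hne2 (hz.symm.trans h))]
  have fval : ∀ x : S₁, (x : B) = a₁ ∨ (x : B) = d₁ := fun x => x.2
  have gval : ∀ x : S₂, (x : B) = a₂ ∨ (x : B) = d₂ := fun x => x.2
  have hgf : ∀ x : S₁, g (f x) = x := by
    intro x
    rcases fval x with hx | hx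
    · rw [hfa x hx, hga _ rfl]; exact Subtype.ext hx.symm
    · rw [hfd x hx, hgd _ rfl]; exact Subtype.ext hx.symm
  have hfg : ∀ x : S₂, f (g x) = x := by
    intro x
    rcases gval x with hx | hx
    · rw [hga x hx, hfa _ rfl]; exact Subtype.ext hx.symm
    · rw [hgd x hx, hfd _ rfl]; exact Subtype.ext hx.symm
  have hmul : ∀ x y : S₁, f (x * y) = f x * f y := by
    intro x y
    have hxy : ((x * y : S₁) : B) = (x : B) * (y : B) := rfl
    rcases fval x with hx | hx <;> rcases fval y with hy | hy
    · rw [hfa x hx, hfa y hy, hfa (x * y) (by rw [hxy, hx, hy, hband])]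
      exact Subtype.ext (hband a₂).symm
    · rw [hfa x hx, hfd y hy, hfd (x * y) (by rw [hxy, hx, hy, had1])]
      exact Subtype.ext had2.symm
    · rw [hfd x hx, hfa y hy, hfd (x * y) (by rw [hxy, hx, hy, hda1])]
      exact Subtype.ext hda2.symm
    · rw [hfd x hx, hfd y hy, hfd (x * y) (by rw [hxy, hx, hy, hband])]
      exact Subtype.ext (hband d₂).symm
  let θ : S₁ ≃* S₂ :=
    { toFun := f, invFun := g, left_inv := hgf, right_inv := hfg, map_mul' := hmul }
  have hfin1 : (S₁ : Set B).Finite := (Set.finite_singleton d₁).insert a₁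
  have hfin2 : (S₂ : Set B).Finite := (Set.finite_singleton d₂).insert a₂
  obtain ⟨Θ, hΘ⟩ := hhom S₁ S₂ hfin1 hfin2 θ
  -- values of Θ on a₁ and d₁
  have hΘa : Θ a₁ = a₂ := by
    have h := hΘ ⟨a₁, ha₁S⟩
    have h2 : θ ⟨a₁, ha₁S⟩ = ⟨a₂, ha₂S⟩ := hfa _ rfl
    rw [h2] at h; exact h
  have hΘd : Θ d₁ = d₂ := by
    have h := hΘ ⟨d₁, hd₁S⟩
    have h2 : θ ⟨d₁, hd₁S⟩ = ⟨d₂, hd₂S⟩ := hfd _ rfl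
    rw [h2] at h; exact h
  refine ⟨Θ, ?_, ?_, ?_, ?_⟩
  · intro x y
    constructor
    · intro h
      rw [← map_mul, ← map_mul, h]
    · intro h
      rw [← map_mul, ← map_mul] at h
      exact Θ.injective h
  · intro y
    refine ⟨Θ.symm y, ?_, ?_⟩ <;> rw [Θ.apply_symm_apply]
    · rw [hband, hband]
    · rw [hband, hband]
  · rw [hΘa]
    exact ⟨by rw [hband, hband], by rw [hband, hband]⟩
  · have hp1 : Θ b₁ * d₂ * Θ b₁ = Θ b₁ := by
      rw [← hΘd, ← map_mul, ← map_mul, hbdb1]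
    have hp2 : d₂ * Θ b₁ * d₂ = d₂ := by
      rw [← hΘd, ← map_mul, ← map_mul, hdbd1]
    exact ⟨dtrans hband hp1 hdbd2, dtrans hband hbdb2 hp2⟩
end

section
/- Let B = [Y; B_α; ψ_{α,β}] be a strong semilattice of rectangular bands in which every connecting morphism ψ_{α,β} is an isomorphism. Then B is isomorphic to the direct product Y × D, where D is a rectangular band isomorphic to each B_α. Conversely, for any semilattice Y and rectangular band D, the product Y × D is isomorphic to a strong semilattice of rectangular bands with all connecting morphisms isomorphisms. -/
section Aux

variable {Y : Type} [SemilatticeInf Y] {B : Y → Type} [∀ α, Semigroup (B α)]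

/-- The connecting map as an equivalence. -/
noncomputable def psiEquiv (ψ : ∀ α β : Y, β ≤ α → B α → B β)
    (hbij : ∀ (α β : Y) (h : β ≤ α), Function.Bijective (ψ α β h))
    (α β : Y) (h : β ≤ α) : B α ≃ B β :=
  Equiv.ofBijective _ (hbij α β h)

/-- The map `B α → B δ` through `B (α ⊓ δ)`. -/
noncomputable def eMap (ψ : ∀ α β : Y, β ≤ α → B α → B β)
    (hbij : ∀ (α β : Y) (h : β ≤ α), Function.Bijective (ψ α β h))
    (δ α : Y) (x : B α) : B δ :=
  (psiEquiv ψ hbij δ (α ⊓ δ) inf_le_right).symm (ψ α (α ⊓ δ) inf_le_left x)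

lemma psi_eMap (ψ : ∀ α β : Y, β ≤ α → B α → B β)
    (hbij : ∀ (α β : Y) (h : β ≤ α), Function.Bijective (ψ α β h))
    (δ α : Y) (x : B α) :
    ψ δ (α ⊓ δ) inf_le_right (eMap ψ hbij δ α x) = ψ α (α ⊓ δ) inf_le_left x :=
  (psiEquiv ψ hbij δ (α ⊓ δ) inf_le_right).apply_symm_apply _

lemma eMap_bijective (ψ : ∀ α β : Y, β ≤ α → B α → B β)
    (hbij : ∀ (α β : Y) (h : β ≤ α), Function.Bijective (ψ α β h))
    (δ α : Y) : Function.Bijective (eMap ψ hbij δ α) :=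
  ((psiEquiv ψ hbij δ (α ⊓ δ) inf_le_right).symm.bijective).comp (hbij α (α ⊓ δ) inf_le_left)

lemma eMap_mul (ψ : ∀ α β : Y, β ≤ α → B α → B β)
    (hhom : ∀ (α β : Y) (h : β ≤ α) (x y : B α),
      ψ α β h (x * y) = ψ α β h x * ψ α β h y)
    (hbij : ∀ (α β : Y) (h : β ≤ α), Function.Bijective (ψ α β h))
    (δ α : Y) (x y : B α) :
    eMap ψ hbij δ α (x * y) = eMap ψ hbij δ α x * eMap ψ hbij δ α y := by
  apply (hbij δ (α ⊓ δ) inf_le_right).1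
  rw [psi_eMap ψ hbij, hhom, hhom, psi_eMap ψ hbij, psi_eMap ψ hbij]

lemma eMap_psi (ψ : ∀ α β : Y, β ≤ α → B α → B β)
    (htrans : ∀ (α β γ : Y) (h1 : β ≤ α) (h2 : γ ≤ β) (x : B α),
      ψ β γ h2 (ψ α β h1 x) = ψ α γ (h2.trans h1) x)
    (hbij : ∀ (α β : Y) (h : β ≤ α), Function.Bijective (ψ α β h))
    (δ α γ : Y) (h : γ ≤ α) (x : B α) :
    eMap ψ hbij δ γ (ψ α γ h x) = eMap ψ hbij δ α x := by
  apply (hbij δ (γ ⊓ δ) inf_le_right).1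
  rw [psi_eMap ψ hbij, htrans]
  have h1 : γ ⊓ δ ≤ α ⊓ δ := inf_le_inf_right δ h
  have h2 := htrans δ (α ⊓ δ) (γ ⊓ δ) inf_le_right h1 (eMap ψ hbij δ α x)
  rw [psi_eMap ψ hbij] at h2
  rw [show (inf_le_right : γ ⊓ δ ≤ δ) = (h1.trans inf_le_right) from rfl, ← h2,
    htrans]

end Aux

/-- A strong semilattice of rectangular bands whose connecting morphisms are all
isomorphisms is isomorphic to a direct product `Y × D` with `D` a rectangular band
isomorphic to each `B_α`; conversely every product `Y × D` of a semilattice and a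
rectangular band is isomorphic to such a strong semilattice. -/
theorem stmt_15 {Y : Type} [SemilatticeInf Y] [Nonempty Y]
    (B : Y → Type) [∀ α, Semigroup (B α)]
    (hband : ∀ (α : Y) (x : B α), x * x = x)
    (hrect : ∀ (α : Y) (x y : B α), x * y * x = x)
    (ψ : ∀ α β : Y, β ≤ α → B α → B β)
    (hhom : ∀ (α β : Y) (h : β ≤ α) (x y : B α),
      ψ α β h (x * y) = ψ α β h x * ψ α β h y)
    (hid : ∀ (α : Y) (x : B α), ψ α α le_rfl x = x)
    (htrans : ∀ (α β γ : Y) (h1 : β ≤ α) (h2 : γ ≤ β) (x : B α),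
      ψ β γ h2 (ψ α β h1 x) = ψ α γ (h2.trans h1) x)
    (hbij : ∀ (α β : Y) (h : β ≤ α), Function.Bijective (ψ α β h))
    (D : Type) [Semigroup D]
    (hDband : ∀ x : D, x * x = x) (hDrect : ∀ x y : D, x * y * x = x) :
    (∀ δ : Y,
      (∀ α : Y, Nonempty (B α ≃* B δ)) ∧
      ∃ f : (Σ α, B α) ≃ Y × B δ,
        ∀ a b : Σ α, B α,
          f (strongMul ψ a b) = ((f a).1 ⊓ (f b).1, (f a).2 * (f b).2)) ∧
    (∃ (T : Y → Type) (mT : ∀ α, T α → T α → T α)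
        (ψT : ∀ α β : Y, β ≤ α → T α → T β),
      (∀ (α : Y) (x y z : T α), mT α (mT α x y) z = mT α x (mT α y z)) ∧
      (∀ (α : Y) (x : T α), mT α x x = x) ∧
      (∀ (α : Y) (x y : T α), mT α (mT α x y) x = x) ∧
      (∀ (α β : Y) (h : β ≤ α) (x y : T α),
        ψT α β h (mT α x y) = mT β (ψT α β h x) (ψT α β h y)) ∧
      (∀ (α : Y) (x : T α), ψT α α le_rfl x = x) ∧
      (∀ (α β γ : Y) (h1 : β ≤ α) (h2 : γ ≤ β) (x : T α),
        ψT β γ h2 (ψT α β h1 x) = ψT α γ (h2.trans h1) x) ∧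
      (∀ (α β : Y) (h : β ≤ α), Function.Bijective (ψT α β h)) ∧
      ∃ g : (Y × D) ≃ (Σ α, T α),
        ∀ a b : Y × D,
          g (a.1 ⊓ b.1, a.2 * b.2) =
            ⟨(g a).1 ⊓ (g b).1,
              mT ((g a).1 ⊓ (g b).1)
                (ψT (g a).1 ((g a).1 ⊓ (g b).1) inf_le_left (g a).2)
                (ψT (g b).1 ((g a).1 ⊓ (g b).1) inf_le_right (g b).2)⟩) := by
  constructor
  · intro δ
    constructor
    · intro α
      exact ⟨{ toEquiv := Equiv.ofBijective _ (eMap_bijective ψ hbij δ α),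
               map_mul' := eMap_mul ψ hhom hbij δ α }⟩
    · refine ⟨{ toFun := fun a => (a.1, eMap ψ hbij δ a.1 a.2)
                invFun := fun p => ⟨p.1, (Equiv.ofBijective _ (eMap_bijective ψ hbij δ p.1)).symm p.2⟩
                left_inv := fun a => ?_
                right_inv := fun p => ?_ }, ?_⟩
      · exact Sigma.ext rfl (heq_of_eq
          ((Equiv.ofBijective _ (eMap_bijective ψ hbij δ a.1)).symm_apply_apply a.2))
      · exact Prod.ext rfl
          ((Equiv.ofBijective _ (eMap_bijective ψ hbij δ p.1)).apply_symm_apply p.2)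
      · rintro ⟨α, x⟩ ⟨β, y⟩
        simp only [strongMul, Equiv.coe_fn_mk]
        refine Prod.ext rfl ?_
        rw [eMap_mul ψ hhom hbij, eMap_psi ψ htrans hbij, eMap_psi ψ htrans hbij]
  · refine ⟨fun _ => D, fun _ x y => x * y, fun _ _ _ x => x,
      fun _ => mul_assoc, fun _ => hDband, fun _ => hDrect,
      fun _ _ _ _ _ => rfl, fun _ _ => rfl, fun _ _ _ _ _ _ => rfl,
      fun _ _ _ => Function.bijective_id,
      (Equiv.sigmaEquivProd Y D).symm, fun a b => rfl⟩
end

section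
/- Let B be a band with linearly ordered structure semilattice, let α > β in the structure semilattice, e_α ∈ B_α, and suppose B_β(e_α) = {x ∈ B_β : x < e_α} intersects more than one L-class of B_β. If B is homogeneous, then every g_β ∈ B_β with e_α g_β = g_β (i.e., g_β ≤_r e_α) satisfies g_β < e_α. -/
section Band

variable {B : Type*} [Semigroup B] (hband : ∀ x : B, x * x = x)
include hband

theorem mul_mul_eq_self_of_eq_mul_mul {a x c y : B} (ha : a = x * c * y) :
    a * c * a = a := by
  have hacy : a * (c * y) = a := by rw [ha, mul_assoc x c y, mul_assoc, hband]
  calc a * c * a = a * c * (a * (c * y) * a) := by rw [hacy, hband]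
    _ = (a * c) * (a * c) * (y * a) := by simp only [mul_assoc]
    _ = a * (c * y) * a := by rw [hband (a * c)]; simp only [mul_assoc]
    _ = a := by rw [hacy, hband]

theorem mul_mul_eq_self_trans {a b c : B} (hab : a * b * a = a) (hbc : b * c * b = b) :
    a * c * a = a :=
  mul_mul_eq_self_of_eq_mul_mul hband (x := a * b) (y := b * a) <| by
    simp only [← mul_assoc]; rw [mul_assoc a b c, mul_assoc a (b * c) b, hbc, hab]

end Band

namespace IsHomogeneous

variable {B : Type*} [Semigroup B]

theorem exists_mulEquiv_extends_perm (hhom : IsHomogeneous B) {s : Set B} (hs : s.Finite)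
    (hrz : ∀ a ∈ s, ∀ c ∈ s, a * c = c) (σ : Equiv.Perm s) :
    ∃ Θ : B ≃* B, ∀ a : s, Θ a = σ a := by
  let S : Subsemigroup B := ⟨s, fun {a c} ha hc => (hrz a ha c hc).symm ▸ hc⟩
  have hmul : ∀ a c : S, a * c = c := fun a c => Subtype.ext (hrz a a.2 c c.2)
  let θ : S ≃* S :=
    { σ with map_mul' := fun a c => by rw [hmul]; exact (hmul (σ a) (σ c)).symm }
  obtain ⟨Θ, hΘ⟩ := hhom S S hs hs θ
  exact ⟨Θ, fun a => hΘ a⟩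

theorem exists_swap (hhom : IsHomogeneous B) {s : Set B} (hs : s.Finite)
    (hrz : ∀ a ∈ s, ∀ c ∈ s, a * c = c) {p q : B} (hp : p ∈ s) (hq : q ∈ s) :
    ∃ Θ : B ≃* B, Θ p = q ∧ Θ q = p ∧ ∀ r ∈ s, r ≠ p → r ≠ q → Θ r = r := by
  classical
  obtain ⟨Θ, hΘ⟩ := hhom.exists_mulEquiv_extends_perm hs hrz (Equiv.swap ⟨p, hp⟩ ⟨q, hq⟩)
  refine ⟨Θ, ?_, ?_, fun r hr hrp hrq => ?_⟩
  · simpa using hΘ ⟨p, hp⟩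
  · simpa using hΘ ⟨q, hq⟩
  · rw [hΘ ⟨r, hr⟩, Equiv.swap_apply_of_ne_of_ne] <;> simpa

theorem eq_of_mul_eq_of_mul_mul_eq (hhom : IsHomogeneous B) (hband : ∀ x : B, x * x = x)
    {e f p q : B} (hefe : e * f * e = e) (hpe : p * e = p) (hpf : p * f = p)
    (hqe : q * e = q) (hqef : q * (e * f) = p) : q = p := by
  have hrz : ∀ a ∈ ({e, e * f} : Set B), ∀ c ∈ ({e, e * f} : Set B), a * c = c := by
    simp only [Set.mem_insert_iff, Set.mem_singleton_iff]
    rintro a (rfl | rfl) c (rfl | rfl)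
    · exact hband _
    · rw [← mul_assoc, hband]
    · exact hefe
    · exact hband _
  obtain ⟨Θ, hΘe, hΘef, -⟩ :=
    hhom.exists_swap (Set.toFinite _) hrz (Set.mem_insert _ _) (Set.mem_insert_of_mem _ rfl)
  have hpef' : Θ p * (e * f) = Θ p := by rw [← hΘe, ← map_mul, hpe]
  have hpe' : Θ p * e = Θ p := by rw [← hΘef, ← map_mul, ← mul_assoc, hpe, hpf]
  have hqef' : Θ q * (e * f) = Θ q := by rw [← hΘe, ← map_mul, hqe]
  have hqe' : Θ q * e = Θ p := by rw [← hΘef, ← map_mul, hqef]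
  apply Θ.injective
  calc Θ q = Θ q * e * f := by rw [mul_assoc, hqef']
    _ = Θ p * e * f := by rw [hqe', hpe']
    _ = Θ p := by rw [mul_assoc, hpef']

theorem mul_mul_eq_of_le (hhom : IsHomogeneous B) (hband : ∀ x : B, x * x = x)
    (hlin : ∀ x y : B, x * y * x = x ∨ y * x * y = y) {e g z : B} (heg : e * g = g)
    (hge : g * e ≠ g) (hze : z * e = z) (hez : e * z = z) (hgzg : g * z * g = g) :
    g * e * z = g * e := by
  set u := g * e with hu
  by_contra hvu_ne
  set v := u * z with hv
  have hue : u * e = u := by rw [hu, mul_assoc, hband]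
  have hgu : g * u = u := by rw [hu, ← mul_assoc, hband]
  have hug : u * g = g := by rw [hu, mul_assoc, heg, hband]
  have hvg : v * g = g := by rw [hv, hu, mul_assoc g e z, hez, hgzg]
  have hvu : v * u = u := by rw [hu, ← mul_assoc, hvg]
  have hgv : g * v = v := by rw [hv, ← mul_assoc, hgu]
  have huv : u * v = v := by rw [hv, ← mul_assoc, hband]
  have hve : v * e = v := by rw [hv, mul_assoc, hze]
  have hrz : ∀ a ∈ ({g, u, v} : Set B), ∀ c ∈ ({g, u, v} : Set B), a * c = c := by
    simp only [Set.mem_insert_iff, Set.mem_singleton_iff]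
    rintro a (rfl | rfl | rfl) c (rfl | rfl | rfl)
    exacts [hband _, hgu, hgv, hug, hband _, huv, hvg, hvu, hband _]
  obtain ⟨Θ, hΘg, hΘv, hΘfix⟩ := hhom.exists_swap (Set.toFinite _) hrz (p := g) (q := v)
    (by simp) (by simp)
  have hΘu : Θ u = u := hΘfix u (by simp) hge (Ne.symm hvu_ne)
  have huf : u * Θ e = u := by rw [← hΘu, ← map_mul, hue]
  have hgf : g * Θ e = g := by rw [← hΘv, ← map_mul, hve]
  have hvf : v * Θ e = u := by rw [← hΘg, ← hΘu, ← map_mul]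
  rcases hlin e (Θ e) with hefe | hfef
  · exact hvu_ne (hhom.eq_of_mul_eq_of_mul_mul_eq hband hefe hue huf hve
      (by rw [← mul_assoc, hve, hvf]))
  · exact hge (hhom.eq_of_mul_eq_of_mul_mul_eq hband hfef huf hue hgf
      (by rw [← mul_assoc, hgf])).symm

end IsHomogeneous

/-- `b` represents the `D`-class `β` (strictly below the class of `e`), and linearity of the
structure semilattice is encoded as `∀ x y, x*y*x = x ∨ y*x*y = y`. -/
theorem stmt_16 {B : Type*} [Semigroup B] (hband : ∀ x : B, x * x = x)
    (hlin : ∀ x y : B, x * y * x = x ∨ y * x * y = y)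
    (hhom : IsHomogeneous B)
    (e b : B)
    (hlt : b * e * b = b ∧ ¬ e * b * e = e)
    (hL : ∃ x y : B,
      (x * b * x = x ∧ b * x * b = b) ∧ (y * b * y = y ∧ b * y * b = b) ∧
      (x * e = x ∧ e * x = x) ∧ (y * e = y ∧ e * y = y) ∧
      ¬ (x * y = x ∧ y * x = y)) :
    ∀ g : B, (g * b * g = g ∧ b * g * b = b) → e * g = g →
      (g * e = g ∧ g ≠ e) := by
  obtain ⟨-, hebe⟩ := hlt
  obtain ⟨x, y, ⟨hxbx, hbxb⟩, ⟨hyby, hbyb⟩, ⟨hxe, hex⟩, ⟨hye, hey⟩, hnotL⟩ := hL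
  rintro g ⟨hgbg, hbgb⟩ heg
  refine ⟨?_, fun hge => hebe (hge ▸ hgbg)⟩
  by_contra hge
  have hbub : b * (g * e) * b = b :=
    mul_mul_eq_self_trans hband hbgb (by rw [← mul_assoc, hband, mul_assoc, heg, hband])
  have hux := hhom.mul_mul_eq_of_le hband hlin heg hge hxe hex
    (mul_mul_eq_self_trans hband hgbg hbxb)
  have huy := hhom.mul_mul_eq_of_le hband hlin heg hge hye hey
    (mul_mul_eq_self_trans hband hgbg hbyb)
  have hxu : x * (g * e) = x := by
    rw [← hux, ← mul_assoc]; exact mul_mul_eq_self_trans hband hxbx hbub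
  have hyu : y * (g * e) = y := by
    rw [← huy, ← mul_assoc]; exact mul_mul_eq_self_trans hband hyby hbub
  exact hnotL ⟨by rw [← hxu, mul_assoc, huy], by rw [← hyu, mul_assoc, hux]⟩
end

section
/- In a band B, for e ∈ B_β and f ∈ B_α with α > β in the structure semilattice: f e = e holds (e ≤_r f) if and only if e is R-related to f e f. Consequently, the set {x ∈ B_β : fx = x} is a union of R-classes of B_β and equals the set of elements of B_β R-related to some element strictly below f. -/
/-- In a band, for `e ∈ B_β`, `f ∈ B_α` with `α > β` (the class of `e` strictly
below the class of `f`): `fe = e` iff `e` is `R`-related to `fef`.  Consequently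
`{x ∈ B_β : fx = x}` is a union of `R`-classes of `B_β`, and equals the set of
elements of `B_β` `R`-related to some element strictly below `f`. -/
theorem stmt_19 {B : Type*} [Semigroup B] (hband : ∀ x : B, x * x = x)
    (e f : B)
    (hlt : e * f * e = e ∧ ¬ f * e * f = f) :
    ((f * e = e) ↔ (e * (f * e * f) = f * e * f ∧ (f * e * f) * e = e)) ∧
    (∀ x y : B, (x * e * x = x ∧ e * x * e = e) → f * x = x →
      (x * y = y ∧ y * x = x) →
      ((y * e * y = y ∧ e * y * e = e) ∧ f * y = y)) ∧
    (∀ x : B, (x * e * x = x ∧ e * x * e = e) →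
      (f * x = x ↔ ∃ y : B, (x * y = y ∧ y * x = x) ∧
        (y * f = y ∧ f * y = y ∧ y ≠ f))) := by
  obtain ⟨h1, h2⟩ := hlt
  refine ⟨⟨?_, ?_⟩, ?_, ?_⟩
  · -- forward direction of the iff
    intro hfe
    constructor
    · rw [hfe, ← mul_assoc, hband]
    · rw [hfe]; exact h1
  · -- backward direction of the iff
    rintro ⟨hA, hB⟩
    have hff : f * (f * e * f) = f * e * f := by
      calc f * (f * e * f) = (f * f) * e * f := by simp only [mul_assoc]
        _ = f * e * f := by rw [hband]
    calc f * e = f * ((f * e * f) * e) := by conv_rhs => rw [hB]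
      _ = (f * (f * e * f)) * e := by simp only [mul_assoc]
      _ = (f * e * f) * e := by rw [hff]
      _ = e := hB
  · -- R-saturation
    rintro x y ⟨hx1, hx2⟩ hfx ⟨hxy, hyx⟩
    have hC : f * y = y := by rw [← hxy, ← mul_assoc, hfx]
    have heyxe : e * y * x * e = e := by
      rw [mul_assoc e y x, hyx]; exact hx2
    have hB2 : e * y * e = e := by
      calc e * y * e = e * y * (e * y * x * e) := by rw [heyxe]
        _ = ((e * y) * (e * y)) * (x * e) := by simp only [mul_assoc]
        _ = (e * y) * (x * e) := by rw [hband]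
        _ = e * (y * x) * e := by simp only [mul_assoc]
        _ = e * x * e := by rw [hyx]
        _ = e := hx2
    have hxey : x * e * y = y := by
      calc x * e * y = (y * x) * e * (x * y) := by rw [hyx, hxy]
        _ = y * (x * e * x) * y := by simp only [mul_assoc]
        _ = y * x * y := by rw [hx1]
        _ = y * y := by rw [mul_assoc, hxy]
        _ = y := hband y
    have hA2 : y * e * y = y := by
      calc y * e * y = (x * e * y) * e * y := by rw [hxey]
        _ = x * (e * y * e) * y := by simp only [mul_assoc]
        _ = x * e * y := by rw [hB2]
        _ = y := hxey
    exact ⟨⟨hA2, hB2⟩, hC⟩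
  · -- characterization of f x = x
    rintro x ⟨hx1, hx2⟩
    constructor
    · intro hfx
      refine ⟨x * f, ⟨?_, ?_⟩, ?_, ?_, ?_⟩
      · rw [← mul_assoc, hband]
      · rw [mul_assoc, hfx, hband]
      · rw [mul_assoc, hband]
      · rw [← mul_assoc, hfx]
      · intro hcon
        apply h2
        have hf : f = x * e * f := by
          calc f = x * f := hcon.symm
            _ = (x * e * x) * f := by rw [hx1]
            _ = x * (e * (x * f)) := by simp only [mul_assoc]
            _ = x * (e * f) := by rw [hcon]
            _ = x * e * f := (mul_assoc x e f).symm
        calc f * e * f = (x * e * f) * e * f := by rw [← hf]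
          _ = x * ((e * f) * (e * f)) := by simp only [mul_assoc]
          _ = x * (e * f) := by rw [hband]
          _ = x * e * f := (mul_assoc x e f).symm
          _ = f := hf.symm
    · rintro ⟨y, ⟨hxy, hyx⟩, hyf, hfy, hne⟩
      rw [← hyx, ← mul_assoc, hfy]
end
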